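/- Under the same hypotheses (x⁽¹⁾ differs from x* on at most δn/(12k) variables, large n), every clear variable v (i.e., b(x*,v,x*_v) < b(x*,v,j) - (δ/3)C(n,k-1) for all j ≠ x*_v) belongs to the set C = {v : b(x⁽¹⁾,v,x⁽²⁾_v) < b(x⁽¹⁾,v,j) - δ·C(n,k-1)/6 for all j ≠ x⁽²⁾_v}. Hence |V ∖ C| is at most the number of unclear variables, which is at most 3nγ/δ when Obj(x*) = γC(n,k). -/

import Mathlib

open Finset
open scoped Classical

/-! By the bounded-difference lemma, `b(x⁽¹⁾, v, ·)` and `b(x*, v, ·)` are uniformly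
`(δ/12)·C(n,k-1)`-close, so a clear minimiser `x*_v` of `b(x*, v, ·)` is also the minimiser
`x⁽²⁾_v` of `b(x⁽¹⁾, v, ·)`, with margin still `(δ/6)·C(n,k-1)`. For an unclear `v`, density
forces `b(x*, v, x*_v) ≥ (δ/3)·C(n,k-1)`, while these self-costs sum to
`k·Obj(x*) = kγ·C(n,k) ≤ nγ·C(n,k-1)`. -/

/-- b(x,v,i): total (normalized) cost of k-sets containing v when v is reassigned to i. -/
noncomputable def bCSP {V D : Type*} [Fintype V] [DecidableEq V] (k : ℕ)
    (p : Finset V → (V → D) → ℝ) (x : V → D) (v : V) (i : D) : ℝ :=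
  ∑ I ∈ ((univ : Finset V).powersetCard k).filter (fun I => v ∈ I),
    p I (Function.update x v i)

/-- The MIN-kCSP objective: Obj(x) = ∑_{I ∈ binom(V,k)} p_I(x). -/
noncomputable def objCSP {V D : Type*} [Fintype V] (k : ℕ)
    (p : Finset V → (V → D) → ℝ) (x : V → D) : ℝ :=
  ∑ I ∈ (univ : Finset V).powersetCard k, p I x

/-- The paper's variable `v` is clear when `IsClearMin (bCSP k p x* v) (x* v) (δ/3 · C(n,k-1))`,
and lies in `C` when `IsClearMin (bCSP k p x⁽¹⁾ v) (x⁽²⁾ v) (δ · C(n,k-1) / 6)`. -/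
def IsClearMin {D : Type*} (f : D → ℝ) (a : D) (t : ℝ) : Prop :=
  ∀ j, j ≠ a → f a < f j - t

section ClearMin

variable {D : Type*} {f g : D → ℝ} {a b : D} {c s t ε : ℝ}

theorem IsClearMin.of_abs_sub_le (hg : IsClearMin g a t) (hfg : ∀ i, |f i - g i| ≤ ε)
    (hb : ∀ i, f b ≤ f i) (hs : 0 ≤ s) (hst : s + 2 * ε ≤ t) : IsClearMin f b s := by
  have hba : b = a := by
    by_contra hne
    have := hg b hne
    have := abs_le.1 (hfg a)
    have := abs_le.1 (hfg b)
    have := hb a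
    linarith
  subst hba
  intro j hj
  have := hg j hj
  have := abs_le.1 (hfg b)
  have := abs_le.1 (hfg j)
  linarith

theorem le_two_mul_add_of_not_isClearMin (hdense : ∀ j, j ≠ a → c ≤ f a + f j)
    (h : ¬IsClearMin f a t) : c ≤ 2 * f a + t := by
  obtain ⟨j, hj, hfj⟩ : ∃ j, j ≠ a ∧ f j - t ≤ f a := by
    simpa [IsClearMin] using h
  linarith [hdense j hj]

end ClearMin

theorem Nat.mul_choose_le_mul_choose_sub_one (n k : ℕ) :
    k * n.choose k ≤ n * n.choose (k - 1) := by
  cases k with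
  | zero => simp
  | succ m =>
    rw [Nat.add_sub_cancel, mul_comm, Nat.choose_succ_right_eq, mul_comm n]
    exact Nat.mul_le_mul_left _ (Nat.sub_le n m)

theorem natCast_mul_choose_sub_two_le {n k : ℕ} (hk : 2 ≤ k) (hkn : k ≤ n)
    (hn : (n : ℝ) / k ≤ ((n : ℝ) - k + 1) / ((k : ℝ) - 1)) :
    (n : ℝ) * n.choose (k - 2) ≤ k * n.choose (k - 1) := by
  obtain ⟨m, rfl⟩ : ∃ m, k = m + 2 := ⟨k - 2, by omega⟩
  have hrec : (n.choose (m + 1) : ℝ) * (m + 1) = n.choose m * (n - m) := by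
    rw [← Nat.cast_sub (by omega : m ≤ n)]
    exact_mod_cast Nat.choose_succ_right_eq n m
  rw [show m + 2 - 1 = m + 1 by omega, Nat.add_sub_cancel]
  push_cast at hn ⊢
  rw [div_le_div_iff₀ (by positivity) (by linarith)] at hn
  have hm : (0 : ℝ) < m + 1 := by positivity
  refine le_of_mul_le_mul_right ?_ hm
  nlinarith [Nat.cast_nonneg (α := ℝ) (n.choose m)]

theorem card_filter_superset_le {α : Type*} [Fintype α] [DecidableEq α] (s : Finset α)
    (k : ℕ) : #{I ∈ (univ : Finset α).powersetCard k | s ⊆ I} ≤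
      (Fintype.card α).choose (k - #s) := by
  rw [← card_univ, ← card_powersetCard]
  refine card_le_card_of_injOn (· \ s) (fun I hI => ?_) (fun I hI J hJ hIJ => ?_)
  · simp only [coe_filter, mem_powersetCard, Set.mem_ofPred_eq] at hI
    simp [card_sdiff_of_subset hI.2, hI.1.2]
  · simp only [coe_filter, mem_powersetCard, Set.mem_ofPred_eq] at hI hJ
    rw [← sdiff_union_of_subset hI.2, ← sdiff_union_of_subset hJ.2]
    exact congrArg (· ∪ s) hIJ

theorem abs_sub_le_card_filter_ne {V D : Type*} {p : Finset V → (V → D) → ℝ}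
    (hloc : ∀ (I : Finset V) (x y : V → D), (∀ u ∈ I, x u = y u) → p I x = p I y)
    (hp01 : ∀ I x, 0 ≤ p I x ∧ p I x ≤ 1) (I : Finset V) (x y : V → D) :
    |p I x - p I y| ≤ #{u ∈ I | x u ≠ y u} := by
  rcases eq_empty_or_nonempty ({u ∈ I | x u ≠ y u} : Finset V) with h | h
  · rw [hloc I x y fun u hu => by simpa using filter_eq_empty_iff.1 h hu]
    simp
  · have h1 : (1 : ℝ) ≤ #{u ∈ I | x u ≠ y u} := by exact_mod_cast h.card_pos
    obtain ⟨hx0, hx1⟩ := hp01 I x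
    obtain ⟨hy0, hy1⟩ := hp01 I y
    exact (abs_sub_le_iff.2 ⟨by linarith, by linarith⟩).trans h1

section CSP

variable {V D : Type*} [Fintype V] [DecidableEq V] {k : ℕ} {p : Finset V → (V → D) → ℝ}

/-- Bounded differences: each disagreement `u ≠ v` of `x` and `y` affects only the
`k`-sets containing both `u` and `v`. -/
theorem abs_bCSP_sub_le
    (hloc : ∀ (I : Finset V) (x y : V → D), (∀ u ∈ I, x u = y u) → p I x = p I y)
    (hp01 : ∀ I x, 0 ≤ p I x ∧ p I x ≤ 1) (x y : V → D) (v : V) (i : D) :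
    |bCSP k p x v i - bCSP k p y v i| ≤
      #{u | x u ≠ y u} * ((Fintype.card V).choose (k - 2) : ℝ) := by
  set S : Finset (Finset V) := {I ∈ (univ : Finset V).powersetCard k | v ∈ I}
  set E : Finset V := ({u | x u ≠ y u} : Finset V).erase v
  have hterm : ∀ I, |p I (Function.update x v i) - p I (Function.update y v i)| ≤ #(E ∩ I) :=
    fun I => (abs_sub_le_card_filter_ne hloc hp01 I _ _).trans <| by
      refine Nat.cast_le.2 (card_le_card fun u hu => ?_)
      obtain ⟨huI, hne⟩ := mem_filter.1 hu
      have huv : u ≠ v := by rintro rfl; simp at hne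
      simp only [Function.update_of_ne huv] at hne
      simp [E, huv, hne, huI]
  have hcount : ∀ u ∈ E, #{I ∈ S | u ∈ I} ≤ (Fintype.card V).choose (k - 2) := by
    intro u hu
    have h := card_filter_superset_le ({u, v} : Finset V) k
    rw [card_pair (ne_of_mem_erase hu)] at h
    refine (card_le_card fun I hI => ?_).trans h
    simp only [S, mem_filter] at hI ⊢
    exact ⟨hI.1.1, insert_subset hI.2 (singleton_subset_iff.2 hI.1.2)⟩
  calc |bCSP k p x v i - bCSP k p y v i|
      = |∑ I ∈ S, (p I (Function.update x v i) - p I (Function.update y v i))| := by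
        rw [bCSP, bCSP, sum_sub_distrib]
    _ ≤ ∑ I ∈ S, |p I (Function.update x v i) - p I (Function.update y v i)| :=
        abs_sum_le_sum_abs _ _
    _ ≤ ∑ I ∈ S, (#(E ∩ I) : ℝ) := sum_le_sum fun I _ => hterm I
    _ ≤ #E * ((Fintype.card V).choose (k - 2) : ℝ) := by
        exact_mod_cast sum_card_inter_le hcount
    _ ≤ #{u | x u ≠ y u} * ((Fintype.card V).choose (k - 2) : ℝ) := by
        gcongr
        exact erase_subset _ _

theorem sum_bCSP_self_eq (x : V → D) :
    ∑ v, bCSP k p x v (x v) = k * objCSP k p x := by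
  simp only [bCSP, objCSP, Function.update_eq_self, sum_filter]
  rw [sum_comm, mul_sum]
  refine sum_congr rfl fun I hI => ?_
  rw [sum_ite_mem, univ_inter, sum_const, nsmul_eq_mul, (mem_powersetCard.1 hI).2]

theorem card_filter_not_isClearMin_mul_le (hp : ∀ I x, 0 ≤ p I x) {x : V → D} {c t : ℝ}
    (hdense : ∀ v i j, i ≠ j → c ≤ bCSP k p x v i + bCSP k p x v j) :
    #{v | ¬IsClearMin (bCSP k p x v) (x v) t} * (c - t) ≤ 2 * (k * objCSP k p x) := by
  have hb : ∀ v, 0 ≤ bCSP k p x v (x v) := fun v => sum_nonneg fun I _ => hp I _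
  calc #{v | ¬IsClearMin (bCSP k p x v) (x v) t} * (c - t)
      ≤ ∑ v ∈ {v | ¬IsClearMin (bCSP k p x v) (x v) t}, 2 * bCSP k p x v (x v) := by
        rw [← nsmul_eq_mul]
        refine card_nsmul_le_sum _ _ _ fun v hv => ?_
        have := le_two_mul_add_of_not_isClearMin (fun j hj => hdense v _ _ hj.symm)
          (mem_filter.1 hv).2
        linarith
    _ ≤ ∑ v, 2 * bCSP k p x v (x v) :=
        sum_le_sum_of_subset_of_nonneg (filter_subset _ _) fun v _ _ => by linarith [hb v]
    _ = 2 * (k * objCSP k p x) := by rw [← mul_sum, sum_bCSP_self_eq]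

theorem card_filter_not_isClearMin_le (hp : ∀ I x, 0 ≤ p I x) (hkn : k ≤ Fintype.card V)
    {x : V → D} {δ γ : ℝ} (hδ : 0 < δ)
    (hdense : ∀ v i j, i ≠ j →
      δ * (Fintype.card V).choose (k - 1) ≤ bCSP k p x v i + bCSP k p x v j)
    (hγ : objCSP k p x = γ * (Fintype.card V).choose k) :
    #{v | ¬IsClearMin (bCSP k p x v) (x v) (δ / 3 * (Fintype.card V).choose (k - 1))} ≤
      3 * Fintype.card V * γ / δ := by
  set n := Fintype.card V
  have hC : (0 : ℝ) < n.choose (k - 1) := by exact_mod_cast Nat.choose_pos (by omega)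
  have hγ0 : 0 ≤ γ := by
    have hobj : 0 ≤ objCSP k p x := sum_nonneg fun I _ => hp I x
    have hCk : (0 : ℝ) < n.choose k := by exact_mod_cast Nat.choose_pos hkn
    rw [hγ] at hobj
    exact nonneg_of_mul_nonneg_left hobj hCk
  have hchoose : (k : ℝ) * n.choose k ≤ n * n.choose (k - 1) := by
    exact_mod_cast Nat.mul_choose_le_mul_choose_sub_one n k
  have h := card_filter_not_isClearMin_mul_le (t := δ / 3 * n.choose (k - 1)) hp hdense
  rw [hγ] at h
  rw [le_div_iff₀ hδ]
  refine le_of_mul_le_mul_right ?_ hC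
  nlinarith [mul_le_mul_of_nonneg_left hchoose hγ0]

end CSP

theorem clear_in_C_and_few_tricky_general {V D : Type*} [Fintype V] [DecidableEq V] (k : ℕ)
    (hk : 2 ≤ k) (hkn : k ≤ Fintype.card V)
    (hn : (Fintype.card V : ℝ) / k ≤ ((Fintype.card V : ℝ) - k + 1) / ((k : ℝ) - 1))
    (δ γ : ℝ) (hδ : 0 < δ)
    (p : Finset V → (V → D) → ℝ)
    (hloc : ∀ (I : Finset V) (x y : V → D), (∀ u ∈ I, x u = y u) → p I x = p I y)
    (hp01 : ∀ I x, 0 ≤ p I x ∧ p I x ≤ 1)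
    (hdense : ∀ (x : V → D) (v : V) (i j : D), i ≠ j →
      δ * ((Fintype.card V).choose (k - 1)) ≤ bCSP k p x v i + bCSP k p x v j)
    (xs : V → D)
    (hγ : objCSP k p xs = γ * ((Fintype.card V).choose k))
    (x1 : V → D)
    (hdiff : (((univ : Finset V).filter (fun u => x1 u ≠ xs u)).card : ℝ)
      ≤ δ * (Fintype.card V) / (12 * k))
    (x2 : V → D) (hx2 : ∀ (v : V) (i : D), bCSP k p x1 v (x2 v) ≤ bCSP k p x1 v i) :
    (∀ v : V,
      (∀ j : D, j ≠ xs v →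
        bCSP k p xs v (xs v) <
          bCSP k p xs v j - (δ / 3) * ((Fintype.card V).choose (k - 1))) →
      (∀ j : D, j ≠ x2 v →
        bCSP k p x1 v (x2 v) <
          bCSP k p x1 v j - δ * ((Fintype.card V).choose (k - 1)) / 6)) ∧
    ((((univ : Finset V).filter (fun v => ¬ (∀ j : D, j ≠ x2 v →
        bCSP k p x1 v (x2 v) <
          bCSP k p x1 v j - δ * ((Fintype.card V).choose (k - 1)) / 6))).card : ℝ)
      ≤ 3 * (Fintype.card V) * γ / δ) := by
  set n := Fintype.card V
  have hk0 : (0 : ℝ) < k := by exact_mod_cast (by omega : 0 < k)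
  have hclose : ∀ v i, |bCSP k p x1 v i - bCSP k p xs v i| ≤ δ / 12 * n.choose (k - 1) :=
    fun v i => calc
      |bCSP k p x1 v i - bCSP k p xs v i| ≤ #{u | x1 u ≠ xs u} * (n.choose (k - 2) : ℝ) :=
        abs_bCSP_sub_le hloc hp01 x1 xs v i
      _ ≤ δ * n / (12 * k) * n.choose (k - 2) := by gcongr
      _ = δ / (12 * k) * (n * n.choose (k - 2)) := by ring
      _ ≤ δ / (12 * k) * (k * n.choose (k - 1)) :=
        mul_le_mul_of_nonneg_left (natCast_mul_choose_sub_two_le hk hkn hn) (by positivity)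
      _ = δ / 12 * n.choose (k - 1) := by field_simp
  have hclear : ∀ v, IsClearMin (bCSP k p xs v) (xs v) (δ / 3 * n.choose (k - 1)) →
      IsClearMin (bCSP k p x1 v) (x2 v) (δ * n.choose (k - 1) / 6) :=
    fun v hv => hv.of_abs_sub_le (hclose v) (hx2 v) (by positivity) (by linarith)
  refine ⟨hclear, le_trans ?_ (card_filter_not_isClearMin_le (fun I x => (hp01 I x).1) hkn hδ
    (hdense xs) hγ)⟩
  exact_mod_cast card_le_card fun v hv =>
    mem_filter.2 ⟨mem_univ v, mt (hclear v) (mem_filter.1 hv).2⟩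

/-- under the same hypotheses, every clear variable belongs to the
clear-cut set C, and hence |V ∖ C| is at most the number of unclear variables,
which is at most 3nγ/δ when Obj(x*) = γ·C(n,k). -/
theorem clear_in_C_and_few_tricky {V D : Type*} [Fintype V] [DecidableEq V] (k : ℕ)
    (hk : 2 ≤ k) (hkn : k ≤ Fintype.card V)
    (hn : (Fintype.card V : ℝ) / k ≤ ((Fintype.card V : ℝ) - k + 1) / ((k : ℝ) - 1))
    (δ γ : ℝ) (hδ : 0 < δ)
    (p : Finset V → (V → D) → ℝ)
    (hloc : ∀ (I : Finset V) (x y : V → D), (∀ u ∈ I, x u = y u) → p I x = p I y)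
    (hp01 : ∀ I x, 0 ≤ p I x ∧ p I x ≤ 1)
    (hdense : ∀ (x : V → D) (v : V) (i j : D), i ≠ j →
      δ * ((Fintype.card V).choose (k - 1)) ≤ bCSP k p x v i + bCSP k p x v j)
    (xs : V → D) (hopt : ∀ x : V → D, objCSP k p xs ≤ objCSP k p x)
    (hγ : objCSP k p xs = γ * ((Fintype.card V).choose k))
    (x1 : V → D)
    (hdiff : (((univ : Finset V).filter (fun u => x1 u ≠ xs u)).card : ℝ)
      ≤ δ * (Fintype.card V) / (12 * k))
    (x2 : V → D) (hx2 : ∀ (v : V) (i : D), bCSP k p x1 v (x2 v) ≤ bCSP k p x1 v i) :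
    (∀ v : V,
      (∀ j : D, j ≠ xs v →
        bCSP k p xs v (xs v) <
          bCSP k p xs v j - (δ / 3) * ((Fintype.card V).choose (k - 1))) →
      (∀ j : D, j ≠ x2 v →
        bCSP k p x1 v (x2 v) <
          bCSP k p x1 v j - δ * ((Fintype.card V).choose (k - 1)) / 6)) ∧
    ((((univ : Finset V).filter (fun v => ¬ (∀ j : D, j ≠ x2 v →
        bCSP k p x1 v (x2 v) <
          bCSP k p x1 v j - δ * ((Fintype.card V).choose (k - 1)) / 6))).card : ℝ)
      ≤ 3 * (Fintype.card V) * γ / δ) :=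
  clear_in_C_and_few_tricky_general k hk hkn hn δ γ hδ p hloc hp01 hdense xs hγ x1 hdiff x2 hx2
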